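/- For every axiom A of PA^ω, the relativized theory PA^ω_r derives its relativization: PA^ω_r ⊢ A^r, where A^r replaces every universal quantifier ∀x of A by the relativized quantifier ∀^r x. -/

import Mathlib

/-! Multisorted classical first-order logic, deep embedding. -/

/-- Sorts: simple types over base sorts. -/
inductive FSort (B : Type) : Type
  | base : B → FSort B
  | arrow : FSort B → FSort B → FSort B

/-- A multisorted first-order signature. -/
structure Signature : Type 1 where
  Base : Type
  Cst : Type
  cstSort : Cst → FSort Base
  Pred : Type
  arity : Pred → List (FSort Base)
  isNeg : Pred → Prop

/-- Type-valued membership of an element in a list (de Bruijn pointers into a context). -/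
inductive Idx {α : Type} : α → List α → Type
  | here {a : α} {l : List α} : Idx a (a :: l)
  | there {a b : α} {l : List α} : Idx a l → Idx a (b :: l)

variable (S : Signature)

/-- Individuals (first-order terms) of the logic, in a sorted context. -/
inductive Trm : List (FSort S.Base) → FSort S.Base → Type
  | var {ctx σ} : Idx σ ctx → Trm ctx σ
  | cst {ctx} (c : S.Cst) : Trm ctx (S.cstSort c)
  | app {ctx σ τ} : Trm ctx (.arrow σ τ) → Trm ctx σ → Trm ctx τ

/-- Lists of terms matching a list of sorts (arguments of a predicate). -/
inductive TrmList (ctx : List (FSort S.Base)) : List (FSort S.Base) → Type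
  | nil : TrmList ctx []
  | cons {σ l} : Trm S ctx σ → TrmList ctx l → TrmList ctx (σ :: l)

/-- Formulas of multisorted first-order logic. -/
inductive Fml : List (FSort S.Base) → Type
  | atom {ctx} (P : S.Pred) : TrmList S ctx (S.arity P) → Fml ctx
  | bot {ctx} : Fml ctx
  | imp {ctx} : Fml ctx → Fml ctx → Fml ctx
  | conj {ctx} : Fml ctx → Fml ctx → Fml ctx
  | all {ctx} (σ : FSort S.Base) : Fml (σ :: ctx) → Fml ctx

variable {S}

/-- Context renamings. -/
def Ren (ctx ctx' : List (FSort S.Base)) : Type := ∀ σ, Idx σ ctx → Idx σ ctx'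

def Ren.lift {ctx ctx' : List (FSort S.Base)} {σ : FSort S.Base} (r : Ren ctx ctx') :
    Ren (σ :: ctx) (σ :: ctx')
  | _, .here => .here
  | _, .there i => .there (r _ i)

def Trm.ren {ctx ctx' : List (FSort S.Base)} (r : Ren ctx ctx') :
    ∀ {σ}, Trm S ctx σ → Trm S ctx' σ
  | _, .var i => .var (r _ i)
  | _, .cst c => .cst c
  | _, .app t u => .app (t.ren r) (u.ren r)

def TrmList.ren {ctx ctx' : List (FSort S.Base)} (r : Ren ctx ctx') :
    ∀ {l}, TrmList S ctx l → TrmList S ctx' l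
  | _, .nil => .nil
  | _, .cons t ts => .cons (t.ren r) (ts.ren r)

def Fml.ren : ∀ {ctx ctx' : List (FSort S.Base)}, Ren ctx ctx' → Fml S ctx → Fml S ctx'
  | _, _, r, .atom P ts => .atom P (ts.ren r)
  | _, _, _, .bot => .bot
  | _, _, r, .imp A B => .imp (A.ren r) (B.ren r)
  | _, _, r, .conj A B => .conj (A.ren r) (B.ren r)
  | _, _, r, .all σ A => .all σ (A.ren r.lift)

/-- Simultaneous substitutions. -/
def Subst (ctx ctx' : List (FSort S.Base)) : Type := ∀ σ, Idx σ ctx → Trm S ctx' σ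

def Subst.lift {ctx ctx' : List (FSort S.Base)} {σ : FSort S.Base} (s : Subst ctx ctx') :
    Subst (σ :: ctx) (σ :: ctx')
  | _, .here => .var .here
  | _, .there i => (s _ i).ren (fun _ j => .there j)

def Trm.sub {ctx ctx' : List (FSort S.Base)} (s : Subst ctx ctx') :
    ∀ {σ}, Trm S ctx σ → Trm S ctx' σ
  | _, .var i => s _ i
  | _, .cst c => .cst c
  | _, .app t u => .app (t.sub s) (u.sub s)

def TrmList.sub {ctx ctx' : List (FSort S.Base)} (s : Subst ctx ctx') :
    ∀ {l}, TrmList S ctx l → TrmList S ctx' l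
  | _, .nil => .nil
  | _, .cons t ts => .cons (t.sub s) (ts.sub s)

def Fml.sub : ∀ {ctx ctx' : List (FSort S.Base)}, Subst ctx ctx' → Fml S ctx → Fml S ctx'
  | _, _, s, .atom P ts => .atom P (ts.sub s)
  | _, _, _, .bot => .bot
  | _, _, s, .imp A B => .imp (A.sub s) (B.sub s)
  | _, _, s, .conj A B => .conj (A.sub s) (B.sub s)
  | _, _, s, .all σ A => .all σ (A.sub s.lift)

/-- Extend a substitution with a term for the head variable. -/
def Subst.cons {ctx ctx' : List (FSort S.Base)} {σ : FSort S.Base}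
    (t : Trm S ctx' σ) (s : Subst ctx ctx') : Subst (σ :: ctx) ctx'
  | _, .here => t
  | _, .there i => s _ i

/-- The identity substitution. -/
def Subst.id {ctx : List (FSort S.Base)} : Subst ctx ctx := fun _ i => .var i

/-- Substitution of a single term for the head variable of the context. -/
def Fml.sub0 {ctx : List (FSort S.Base)} {σ : FSort S.Base}
    (t : Trm S ctx σ) (A : Fml S (σ :: ctx)) : Fml S ctx :=
  A.sub (Subst.cons t Subst.id)

/-- Weakening renaming. -/
def Ren.wk {ctx : List (FSort S.Base)} {σ : FSort S.Base} : Ren ctx (σ :: ctx) :=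
  fun _ i => .there i

/-- Weakening of a closed formula to an arbitrary context. -/
def Fml.wk0 {ctx : List (FSort S.Base)} (A : Fml S []) : Fml S ctx :=
  A.ren (fun _ i => by cases i)


/-! ## Polarities and relativization -/

/-- Negative formulas: negative atoms, `⊥`, `A ⇒ N`, `N ∧ N'`, `∀x N`. -/
inductive IsNeg : ∀ {ctx : List (FSort S.Base)}, Fml S ctx → Prop
  | atom {ctx} {P : S.Pred} (h : S.isNeg P) (ts : TrmList S ctx (S.arity P)) :
      IsNeg (.atom P ts)
  | bot {ctx} : IsNeg (ctx := ctx) .bot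
  | imp {ctx} {A B : Fml S ctx} : IsNeg B → IsNeg (.imp A B)
  | conj {ctx} {A B : Fml S ctx} : IsNeg A → IsNeg B → IsNeg (.conj A B)
  | all {ctx σ} {A : Fml S (σ :: ctx)} : IsNeg A → IsNeg (.all σ A)

/-- Positive formulas: positive atoms, `A ⇒ P`, `P ∧ B`, `A ∧ P`, `∀x P`. -/
inductive IsPos : ∀ {ctx : List (FSort S.Base)}, Fml S ctx → Prop
  | atom {ctx} {P : S.Pred} (h : ¬ S.isNeg P) (ts : TrmList S ctx (S.arity P)) :
      IsPos (.atom P ts)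
  | imp {ctx} {A B : Fml S ctx} : IsPos B → IsPos (.imp A B)
  | conjL {ctx} {A B : Fml S ctx} : IsPos A → IsPos (.conj A B)
  | conjR {ctx} {A B : Fml S ctx} : IsPos B → IsPos (.conj A B)
  | all {ctx σ} {A : Fml S (σ :: ctx)} : IsPos A → IsPos (.all σ A)

variable (S) in
/-- The relativized signature `Σ^r`: `Σ` extended with a positive unary relativization
predicate `Rel(·)` at each base sort. -/
def SigR : Signature where
  Base := S.Base
  Cst := S.Cst
  cstSort := S.cstSort
  Pred := S.Pred ⊕ S.Base
  arity
    | .inl P => S.arity P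
    | .inr b => [.base b]
  isNeg
    | .inl P => S.isNeg P
    | .inr _ => False

/-- Terms over `Σ` are terms over `Σ^r`. -/
def Trm.emb : ∀ {ctx : List (FSort S.Base)} {σ}, Trm S ctx σ → Trm (SigR S) ctx σ
  | _, _, .var i => .var i
  | _, _, .cst c => Trm.cst (S := SigR S) c
  | _, _, .app t u => .app t.emb u.emb

def TrmList.emb : ∀ {ctx : List (FSort S.Base)} {l}, TrmList S ctx l → TrmList (SigR S) ctx l
  | _, _, .nil => .nil
  | _, _, .cons t ts => .cons t.emb ts.emb

/-- The relativization predicate, lifted from base sorts to all sorts by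
`Rel(t : σ→τ) := ∀x^σ (Rel(x) ⇒ Rel(t x))`. -/
def RelF : ∀ {ctx : List (FSort S.Base)} (σ : FSort S.Base),
    Trm (SigR S) ctx σ → Fml (SigR S) ctx
  | _, .base b, t => Fml.atom (S := SigR S) (.inr b) (.cons t .nil)
  | _, .arrow σ τ, t =>
      .all σ (.imp (RelF σ (.var .here)) (RelF τ (.app (t.ren Ren.wk) (.var .here))))

/-- The relativized universal quantifier `∀^r x A := ∀x (Rel(x) ⇒ A)`. -/
def allR {ctx : List (FSort S.Base)} (σ : FSort S.Base) (A : Fml (SigR S) (σ :: ctx)) :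
    Fml (SigR S) ctx :=
  .all σ (.imp (RelF σ (.var .here)) A)

/-- The relativization `A^r` of a formula: every `∀x` is replaced by `∀^r x`, and
atoms, `⊥`, `⇒`, `∧` are left unchanged. -/
def Fml.relativize : ∀ {ctx : List (FSort S.Base)}, Fml S ctx → Fml (SigR S) ctx
  | _, .atom P ts => Fml.atom (S := SigR S) (.inl P) ts.emb
  | _, .bot => .bot
  | _, .imp A B => .imp A.relativize B.relativize
  | _, .conj A B => .conj A.relativize B.relativize
  | _, .all σ A => allR σ A.relativize

/-- The embedding of formulas over `Σ` as formulas over `Σ^r` (atoms are mapped to the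
corresponding atoms of `Σ^r`, everything else is unchanged). -/
def Fml.emb : ∀ {ctx : List (FSort S.Base)}, Fml S ctx → Fml (SigR S) ctx
  | _, .atom P ts => Fml.atom (S := SigR S) (.inl P) ts.emb
  | _, .bot => .bot
  | _, .imp A B => .imp A.emb B.emb
  | _, .conj A B => .conj A.emb B.emb
  | _, .all σ A => .all σ A.emb

/-- Derivability of sequents `Γ ⊢ A | Δ` in classical multi-conclusioned natural deduction
from a theory `T` of closed axioms, with all right-hand contexts `Δ` restricted to contain
only negative formulas. -/
inductive DerivN (T : Fml S [] → Prop) :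
    ∀ (ctx : List (FSort S.Base)), List (Fml S ctx) → Fml S ctx → List (Fml S ctx) → Prop
  | id {ctx Γ A Δ} : (∀ B ∈ Δ, IsNeg B) → A ∈ Γ → DerivN T ctx Γ A Δ
  | ax {ctx Γ Δ} {A : Fml S []} : (∀ B ∈ Δ, IsNeg B) → T A → DerivN T ctx Γ A.wk0 Δ
  | botI {ctx Γ A Δ} : A ∈ Δ → DerivN T ctx Γ A Δ → DerivN T ctx Γ .bot Δ
  | botE {ctx Γ A Δ} : DerivN T ctx Γ .bot (A :: Δ) → DerivN T ctx Γ A Δ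
  | impI {ctx Γ A B Δ} : DerivN T ctx (A :: Γ) B Δ → DerivN T ctx Γ (.imp A B) Δ
  | impE {ctx Γ A B Δ} :
      DerivN T ctx Γ (.imp A B) Δ → DerivN T ctx Γ A Δ → DerivN T ctx Γ B Δ
  | conjI {ctx Γ A B Δ} :
      DerivN T ctx Γ A Δ → DerivN T ctx Γ B Δ → DerivN T ctx Γ (.conj A B) Δ
  | conjE1 {ctx Γ A B Δ} : DerivN T ctx Γ (.conj A B) Δ → DerivN T ctx Γ A Δ
  | conjE2 {ctx Γ A B Δ} : DerivN T ctx Γ (.conj A B) Δ → DerivN T ctx Γ B Δ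
  | allI {ctx Γ σ A Δ} :
      DerivN T (σ :: ctx) (Γ.map (Fml.ren Ren.wk)) A (Δ.map (Fml.ren Ren.wk)) →
      DerivN T ctx Γ (.all σ A) Δ
  | allE {ctx Γ σ A Δ} (t : Trm S ctx σ) :
      DerivN T ctx Γ (.all σ A) Δ → DerivN T ctx Γ (A.sub0 t) Δ
/-! ## Peano arithmetic in finite types, PA^ω -/

/-- Constants of `PA^ω`. -/
inductive PACst : Type
  | s : FSort Unit → FSort Unit → FSort Unit → PACst
  | k : FSort Unit → FSort Unit → PACst
  | zero : PACst
  | succ : PACst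
  | recr : FSort Unit → PACst

/-- The base sort `ι` of natural numbers. -/
abbrev iota : FSort Unit := .base ()

/-- Predicates of `PA^ω`: an inequality predicate at each sort. -/
inductive PAPred : Type
  | neq : FSort Unit → PAPred

/-- The signature of `PA^ω`. -/
def PASig : Signature where
  Base := Unit
  Cst := PACst
  cstSort
    | .s σ τ ρ => .arrow (.arrow σ (.arrow τ ρ)) (.arrow (.arrow σ τ) (.arrow σ ρ))
    | .k σ τ => .arrow σ (.arrow τ σ)
    | .zero => iota
    | .succ => .arrow iota iota
    | .recr σ => .arrow σ (.arrow (.arrow iota (.arrow σ σ)) (.arrow iota σ))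
  Pred := PAPred
  arity | .neq σ => [σ, σ]
  isNeg := fun _ => True

/-- The inequality atom `t ≠ u`. -/
def neqF {ctx : List (FSort Unit)} {σ : FSort Unit} (t u : Trm PASig ctx σ) :
    Fml PASig ctx :=
  .atom (S := PASig) (.neq σ) (.cons t (.cons u .nil))

/-- Negation `¬A := A ⇒ ⊥`. -/
def notF {S : Signature} {ctx : List (FSort S.Base)} (A : Fml S ctx) : Fml S ctx := .imp A .bot

/-- Equality `t = u := ¬(t ≠ u)`. -/
def eqF {ctx : List (FSort Unit)} {σ : FSort Unit} (t u : Trm PASig ctx σ) :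
    Fml PASig ctx :=
  notF (neqF t u)

/-- Universal closure over a context. -/
def alls {S : Signature} : ∀ (ctx : List (FSort S.Base)), Fml S ctx → Fml S []
  | [], A => A
  | σ :: ctx, A => alls ctx (.all σ A)


/-- The constant `0`. -/
def zeroT {ctx : List (FSort Unit)} : Trm PASig ctx iota := Trm.cst (S := PASig) PACst.zero
/-- The constant `S`. -/
def succT {ctx : List (FSort Unit)} : Trm PASig ctx (.arrow iota iota) := Trm.cst (S := PASig) PACst.succ
/-- The constant `s`. -/
def sT {ctx : List (FSort Unit)} (σ τ ρ : FSort Unit) :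
    Trm PASig ctx (.arrow (.arrow σ (.arrow τ ρ)) (.arrow (.arrow σ τ) (.arrow σ ρ))) :=
  Trm.cst (S := PASig) (PACst.s σ τ ρ)
/-- The constant `k`. -/
def kT {ctx : List (FSort Unit)} (σ τ : FSort Unit) :
    Trm PASig ctx (.arrow σ (.arrow τ σ)) := Trm.cst (S := PASig) (PACst.k σ τ)
/-- The constant `rec`. -/
def recT {ctx : List (FSort Unit)} (σ : FSort Unit) :
    Trm PASig ctx (.arrow σ (.arrow (.arrow iota (.arrow σ σ)) (.arrow iota σ))) :=
  Trm.cst (S := PASig) (PACst.recr σ)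

open Trm in
/-- The axioms of `PA^ω`: reflexivity, the Leibniz scheme, `S x ≠ 0`, the induction
scheme, and the defining equations of `s`, `k` and `rec`. -/
inductive PAAx : Fml PASig [] → Prop
  | refl (σ : FSort Unit) :
      PAAx (.all σ (eqF (.var .here) (.var .here)))
  | leib {ctx : List (FSort Unit)} (σ : FSort Unit) (A : Fml PASig (σ :: ctx)) :
      PAAx (alls ctx (.all σ (.all σ (.imp
        (notF (A.ren (Ren.wk (S := PASig) (σ := σ))))
        (.imp
          (A.ren (Ren.lift (Ren.wk (S := PASig) (σ := σ))))
          (neqF (σ := σ) (.var (.there .here)) (.var .here)))))))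
  | snz : PAAx (.all iota (neqF (.app (succT) (.var .here)) (zeroT)))
  | ind {ctx : List (FSort Unit)} (A : Fml PASig (iota :: ctx)) :
      PAAx (alls ctx (.imp (A.sub0 (zeroT))
        (.imp (.all iota (.imp A
          (A.sub (Subst.cons (.app (succT) (.var .here))
            (fun _ i => .var (.there i))))))
        (.all iota A))))
  | defs (σ τ ρ : FSort Unit) :
      PAAx (.all (.arrow σ (.arrow τ ρ)) (.all (.arrow σ τ) (.all σ
        (eqF
          (.app (.app (.app (sT σ τ ρ) (.var (.there (.there .here))))
            (.var (.there .here))) (.var .here))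
          (.app (.app (.var (.there (.there .here))) (.var .here))
            (.app (.var (.there .here)) (.var .here)))))))
  | defk (σ τ : FSort Unit) :
      PAAx (.all σ (.all τ
        (eqF (.app (.app (kT σ τ) (.var (.there .here))) (.var .here))
          (.var (.there .here)))))
  | defrecZ (σ : FSort Unit) :
      PAAx (.all σ (.all (.arrow iota (.arrow σ σ))
        (eqF (.app (.app (.app (recT σ) (.var (.there .here))) (.var .here))
            (zeroT))
          (.var (.there .here)))))
  | defrecS (σ : FSort Unit) :
      PAAx (.all σ (.all (.arrow iota (.arrow σ σ)) (.all iota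
        (eqF
          (.app (.app (.app (recT σ) (.var (.there (.there .here))))
            (.var (.there .here))) (.app (succT) (.var .here)))
          (.app (.app (.var (.there .here)) (.var .here))
            (.app (.app (.app (recT σ) (.var (.there (.there .here))))
              (.var (.there .here))) (.var .here)))))))

open Trm in
/-- The non-schematic axioms of `PA^ω`: reflexivity, `S x ≠ 0`, and the defining
equations of `s`, `k` and `rec`. -/
inductive PAEqAx : Fml PASig [] → Prop
  | refl (σ : FSort Unit) :
      PAEqAx (.all σ (eqF (.var .here) (.var .here)))
  | snz : PAEqAx (.all iota (neqF (.app (succT) (.var .here)) (zeroT)))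
  | defs (σ τ ρ : FSort Unit) :
      PAEqAx (.all (.arrow σ (.arrow τ ρ)) (.all (.arrow σ τ) (.all σ
        (eqF
          (.app (.app (.app (sT σ τ ρ) (.var (.there (.there .here))))
            (.var (.there .here))) (.var .here))
          (.app (.app (.var (.there (.there .here))) (.var .here))
            (.app (.var (.there .here)) (.var .here)))))))
  | defk (σ τ : FSort Unit) :
      PAEqAx (.all σ (.all τ
        (eqF (.app (.app (kT σ τ) (.var (.there .here))) (.var .here))
          (.var (.there .here)))))
  | defrecZ (σ : FSort Unit) :
      PAEqAx (.all σ (.all (.arrow iota (.arrow σ σ))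
        (eqF (.app (.app (.app (recT σ) (.var (.there .here))) (.var .here))
            (zeroT))
          (.var (.there .here)))))
  | defrecS (σ : FSort Unit) :
      PAEqAx (.all σ (.all (.arrow iota (.arrow σ σ)) (.all iota
        (eqF
          (.app (.app (.app (recT σ) (.var (.there (.there .here))))
            (.var (.there .here))) (.app (succT) (.var .here)))
          (.app (.app (.var (.there .here)) (.var .here))
            (.app (.app (.app (recT σ) (.var (.there (.there .here))))
              (.var (.there .here))) (.var .here)))))))


/-! ## Relativized Peano arithmetic `PA^ω_r` -/

/-- The relativized signature of `PA^ω`. -/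
abbrev PASigR : Signature := SigR PASig

/-- The inequality atom `t ≠ u` over the relativized signature. -/
def neqR {ctx : List (FSort Unit)} {σ : FSort Unit} (t u : Trm PASigR ctx σ) :
    Fml PASigR ctx :=
  Fml.atom (S := PASigR) (.inl (PAPred.neq σ)) (.cons t (.cons u .nil))

/-- Equality `t = u := ¬(t ≠ u)` over the relativized signature. -/
def eqR {ctx : List (FSort Unit)} {σ : FSort Unit} (t u : Trm PASigR ctx σ) :
    Fml PASigR ctx :=
  notF (neqR t u)

/-- The axioms of `PA^ω_r`: the axioms of `PA^ω` (with the Leibniz scheme taken for all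
formulas of the relativized signature), except that the induction scheme is replaced by its
relativized version `IND`, plus the axioms `Rel(0)` and `∀^r x^ι Rel(S x)`. -/
inductive PArAx : Fml PASigR [] → Prop
  | base {A : Fml PASig []} : PAEqAx A → PArAx A.emb
  | leib {ctx : List (FSort Unit)} (σ : FSort Unit) (A : Fml PASigR (σ :: ctx)) :
      PArAx (alls ctx (.all σ (.all σ (.imp
        (notF (A.ren (Ren.wk (S := PASigR) (σ := σ))))
        (.imp
          (A.ren (Ren.lift (Ren.wk (S := PASigR) (σ := σ))))
          (neqR (σ := σ) (.var (.there .here)) (.var .here)))))))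
  | indR {ctx : List (FSort Unit)} (A : Fml PASigR (iota :: ctx)) :
      PArAx (alls ctx (.imp (A.sub0 zeroT.emb)
        (.imp (allR iota (.imp A
          (A.sub (Subst.cons (.app succT.emb (.var .here))
            (fun _ i => .var (.there i))))))
        (allR iota A))))
  | rel0 : PArAx (RelF iota zeroT.emb)
  | relS : PArAx (allR iota (RelF iota (.app succT.emb (.var .here))))

attribute [reducible] SigR

/-! ## Auxiliary lemmas -/

section Aux
variable {S : Signature}

theorem Ren.lift_comp {c1 c2 c3 : List (FSort S.Base)} {σ : FSort S.Base}
    (r : Ren c1 c2) (r' : Ren c2 c3) :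
    (Ren.lift (σ := σ) (fun τ i => r' τ (r τ i)))
      = fun τ i => Ren.lift r' τ (Ren.lift r τ i) := by
  funext τ i; cases i <;> rfl

theorem Trm.ren_comp {c1 c2 c3 : List (FSort S.Base)} (r : Ren c1 c2) (r' : Ren c2 c3) :
    ∀ {σ} (t : Trm S c1 σ), (t.ren r).ren r' = t.ren (fun τ i => r' τ (r τ i))
  | _, .var i => rfl
  | _, .cst c => rfl
  | _, .app t u => by simp [Trm.ren, Trm.ren_comp r r' t, Trm.ren_comp r r' u]

theorem TrmList.ren_comp {c1 c2 c3 : List (FSort S.Base)} (r : Ren c1 c2) (r' : Ren c2 c3) :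
    ∀ {l} (ts : TrmList S c1 l), (ts.ren r).ren r' = ts.ren (fun τ i => r' τ (r τ i))
  | _, .nil => rfl
  | _, .cons t ts => by
      simp [TrmList.ren, Trm.ren_comp r r' t, TrmList.ren_comp r r' ts]

theorem Fml.ren_comp : ∀ {c1 : List (FSort S.Base)} (A : Fml S c1)
    {c2 c3 : List (FSort S.Base)} (r : Ren c1 c2) (r' : Ren c2 c3),
    (A.ren r).ren r' = A.ren (fun τ i => r' τ (r τ i))
  | _, .atom P ts, _, _, r, r' => by simp [Fml.ren, TrmList.ren_comp]
  | _, .bot, _, _, r, r' => rfl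
  | _, .imp A B, _, _, r, r' => by simp [Fml.ren, Fml.ren_comp A, Fml.ren_comp B]
  | _, .conj A B, _, _, r, r' => by simp [Fml.ren, Fml.ren_comp A, Fml.ren_comp B]
  | _, .all σ A, _, _, r, r' => by
      simp [Fml.ren, Fml.ren_comp A, Ren.lift_comp]

theorem Subst.lift_ren_sub {c1 c2 c3 : List (FSort S.Base)} {σ : FSort S.Base}
    (r : Ren c1 c2) (s : Subst c2 c3) :
    (Subst.lift (σ := σ) (fun τ i => s τ (r τ i)))
      = fun τ i => Subst.lift s τ (Ren.lift r τ i) := by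
  funext τ i; cases i <;> rfl

theorem Trm.ren_sub {c1 c2 c3 : List (FSort S.Base)} (r : Ren c1 c2) (s : Subst c2 c3) :
    ∀ {σ} (t : Trm S c1 σ), (t.ren r).sub s = t.sub (fun τ i => s τ (r τ i))
  | _, .var i => rfl
  | _, .cst c => rfl
  | _, .app t u => by simp [Trm.ren, Trm.sub, Trm.ren_sub r s t, Trm.ren_sub r s u]

theorem TrmList.ren_sub {c1 c2 c3 : List (FSort S.Base)} (r : Ren c1 c2) (s : Subst c2 c3) :
    ∀ {l} (ts : TrmList S c1 l), (ts.ren r).sub s = ts.sub (fun τ i => s τ (r τ i))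
  | _, .nil => rfl
  | _, .cons t ts => by
      simp [TrmList.ren, TrmList.sub, Trm.ren_sub, TrmList.ren_sub r s ts]

theorem Fml.ren_sub : ∀ {c1 : List (FSort S.Base)} (A : Fml S c1)
    {c2 c3 : List (FSort S.Base)} (r : Ren c1 c2) (s : Subst c2 c3),
    (A.ren r).sub s = A.sub (fun τ i => s τ (r τ i))
  | _, .atom P ts, _, _, r, s => by simp [Fml.ren, Fml.sub, TrmList.ren_sub]
  | _, .bot, _, _, r, s => rfl
  | _, .imp A B, _, _, r, s => by simp [Fml.ren, Fml.sub, Fml.ren_sub A, Fml.ren_sub B]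
  | _, .conj A B, _, _, r, s => by simp [Fml.ren, Fml.sub, Fml.ren_sub A, Fml.ren_sub B]
  | _, .all σ A, _, _, r, s => by
      simp [Fml.ren, Fml.sub, Fml.ren_sub A, Subst.lift_ren_sub]

theorem Subst.lift_sub_ren {c1 c2 c3 : List (FSort S.Base)} {σ : FSort S.Base}
    (s : Subst c1 c2) (r : Ren c2 c3) :
    (Subst.lift (σ := σ) (fun τ i => (s τ i).ren r))
      = fun τ i => (Subst.lift s τ i).ren (Ren.lift r) := by
  funext τ i; cases i with
  | here => rfl
  | there i =>
      show ((s _ i).ren r).ren (fun _ j => .there j) = ((s _ i).ren _).ren (Ren.lift r)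
      exact (Trm.ren_comp r (Ren.wk (σ := σ)) (s _ i)).trans
        (Trm.ren_comp (Ren.wk (σ := σ)) (Ren.lift r) (s _ i)).symm

theorem Trm.sub_ren {c1 c2 c3 : List (FSort S.Base)} (s : Subst c1 c2) (r : Ren c2 c3) :
    ∀ {σ} (t : Trm S c1 σ), (t.sub s).ren r = t.sub (fun τ i => (s τ i).ren r)
  | _, .var i => rfl
  | _, .cst c => rfl
  | _, .app t u => by simp [Trm.sub, Trm.ren, Trm.sub_ren s r t, Trm.sub_ren s r u]

theorem TrmList.sub_ren {c1 c2 c3 : List (FSort S.Base)} (s : Subst c1 c2) (r : Ren c2 c3) :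
    ∀ {l} (ts : TrmList S c1 l), (ts.sub s).ren r = ts.sub (fun τ i => (s τ i).ren r)
  | _, .nil => rfl
  | _, .cons t ts => by
      simp [TrmList.sub, TrmList.ren, Trm.sub_ren, TrmList.sub_ren s r ts]

theorem Fml.sub_ren : ∀ {c1 : List (FSort S.Base)} (A : Fml S c1)
    {c2 c3 : List (FSort S.Base)} (s : Subst c1 c2) (r : Ren c2 c3),
    (A.sub s).ren r = A.sub (fun τ i => (s τ i).ren r)
  | _, .atom P ts, _, _, s, r => by simp [Fml.ren, Fml.sub, TrmList.sub_ren]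
  | _, .bot, _, _, s, r => rfl
  | _, .imp A B, _, _, s, r => by simp [Fml.ren, Fml.sub, Fml.sub_ren A, Fml.sub_ren B]
  | _, .conj A B, _, _, s, r => by simp [Fml.ren, Fml.sub, Fml.sub_ren A, Fml.sub_ren B]
  | _, .all σ A, _, _, s, r => by
      simp [Fml.ren, Fml.sub, Fml.sub_ren A, Subst.lift_sub_ren]

theorem Subst.lift_id {ctx : List (FSort S.Base)} {σ : FSort S.Base} :
    (Subst.id (ctx := ctx)).lift (σ := σ) = Subst.id := by
  funext τ i; cases i <;> rfl

theorem Trm.sub_id {ctx : List (FSort S.Base)} :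
    ∀ {σ} (t : Trm S ctx σ), t.sub Subst.id = t
  | _, .var i => rfl
  | _, .cst c => rfl
  | _, .app t u => by simp [Trm.sub, Trm.sub_id t, Trm.sub_id u]

theorem TrmList.sub_id {ctx : List (FSort S.Base)} :
    ∀ {l} (ts : TrmList S ctx l), ts.sub Subst.id = ts
  | _, .nil => rfl
  | _, .cons t ts => by simp [TrmList.sub, Trm.sub_id, TrmList.sub_id ts]

theorem Fml.sub_id : ∀ {ctx : List (FSort S.Base)} (A : Fml S ctx), A.sub Subst.id = A
  | _, .atom P ts => by simp [Fml.sub, TrmList.sub_id]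
  | _, .bot => rfl
  | _, .imp A B => by simp [Fml.sub, Fml.sub_id A, Fml.sub_id B]
  | _, .conj A B => by simp [Fml.sub, Fml.sub_id A, Fml.sub_id B]
  | _, .all σ A => by simp [Fml.sub, Subst.lift_id, Fml.sub_id A]

theorem Ren.lift_idfun {ctx : List (FSort S.Base)} {σ : FSort S.Base} :
    (Ren.lift (σ := σ) (fun (τ : FSort S.Base) (i : Idx τ ctx) => i)) = fun τ i => i := by
  funext τ i; cases i <;> rfl

theorem Trm.ren_id : ∀ {ctx : List (FSort S.Base)} {σ} (t : Trm S ctx σ),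
    t.ren (fun τ i => i) = t
  | _, _, .var i => rfl
  | _, _, .cst c => rfl
  | _, _, .app t u => by
      show Trm.app (t.ren _) (u.ren _) = _
      rw [Trm.ren_id t, Trm.ren_id u]

theorem TrmList.ren_id : ∀ {ctx : List (FSort S.Base)} {l} (ts : TrmList S ctx l),
    ts.ren (fun τ i => i) = ts
  | _, _, .nil => rfl
  | _, _, .cons t ts => by
      show TrmList.cons (t.ren _) (ts.ren _) = _
      rw [Trm.ren_id, TrmList.ren_id ts]

theorem Fml.ren_id : ∀ {ctx : List (FSort S.Base)} (A : Fml S ctx),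
    A.ren (fun τ i => i) = A
  | _, .atom P ts => by show Fml.atom P (ts.ren _) = _; rw [TrmList.ren_id]
  | _, .bot => rfl
  | _, .imp A B => by show Fml.imp (A.ren _) (B.ren _) = _; rw [Fml.ren_id A, Fml.ren_id B]
  | _, .conj A B => by show Fml.conj (A.ren _) (B.ren _) = _; rw [Fml.ren_id A, Fml.ren_id B]
  | _, .all σ A => by
      show Fml.all σ (A.ren _) = _
      rw [Ren.lift_idfun, Fml.ren_id A]

theorem Fml.wk0_nil (A : Fml S []) : (A.wk0 : Fml S []) = A := by
  have h2 : (A.wk0 : Fml S []) = A.ren (fun τ i => i) := by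
    show A.ren _ = A.ren _
    congr 1
    funext τ i
    cases i
  rw [h2, Fml.ren_id]

theorem Fml.wk0_ren {c c' : List (FSort S.Base)} (A : Fml S []) (r : Ren c c') :
    (A.wk0 : Fml S c).ren r = A.wk0 := by
  show (A.ren _).ren r = A.ren _
  refine (Fml.ren_comp _ _ _).trans ?_
  congr 1
  funext τ i; cases i

theorem Fml.sub0_ren {c c' : List (FSort S.Base)} (r : Ren c c') {σ : FSort S.Base}
    (A : Fml S (σ :: c)) (t : Trm S c σ) :
    (A.sub0 t).ren r = (A.ren r.lift).sub0 (t.ren r) := by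
  show (A.sub _).ren r = (A.ren r.lift).sub _
  rw [Fml.sub_ren, Fml.ren_sub]
  congr 1
  funext τ i; cases i <;> rfl

theorem Fml.sub0_var_ren_wk {c : List (FSort S.Base)} {σ : FSort S.Base}
    (A : Fml S (σ :: c)) :
    (A.ren (Ren.lift (Ren.wk (σ := σ)))).sub0 (.var .here) = A := by
  show (A.ren _).sub _ = A
  rw [Fml.ren_sub]
  have h : (fun (ρ : FSort S.Base) (i : Idx ρ (σ :: c)) =>
      Subst.cons (S := S) (Trm.var .here) Subst.id ρ (Ren.lift (Ren.wk (σ := σ)) ρ i))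
      = Subst.id := by
    funext ρ i; cases i <;> rfl
  rw [h, Fml.sub_id]

theorem IsNeg.ren {c c' : List (FSort S.Base)} {A : Fml S c} (h : IsNeg A) (r : Ren c c') :
    IsNeg (A.ren r) := by
  induction h generalizing c' with
  | atom h ts => exact .atom h _
  | bot => exact .bot
  | imp h ih => exact .imp (ih r)
  | conj h1 h2 ih1 ih2 => exact .conj (ih1 r) (ih2 r)
  | all h ih => exact .all (ih r.lift)

theorem Fml.ren_wk_comm {c c' : List (FSort S.Base)} {σ : FSort S.Base} (r : Ren c c') :
    (Fml.ren (S := S) (Ren.wk (σ := σ)) ∘ Fml.ren r)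
      = Fml.ren (Ren.lift r) ∘ Fml.ren (Ren.wk (σ := σ)) := by
  funext A
  show (A.ren r).ren _ = (A.ren _).ren _
  rw [Fml.ren_comp, Fml.ren_comp]
  congr 1

theorem DerivN.renD {T : Fml S [] → Prop} {ctx Γ A Δ}
    (d : DerivN T ctx Γ A Δ) : ∀ {ctx'} (r : Ren ctx ctx'),
    DerivN T ctx' (Γ.map (Fml.ren r)) (A.ren r) (Δ.map (Fml.ren r)) := by
  induction d with
  | id hneg hmem =>
      intro ctx' r
      refine .id ?_ (List.mem_map_of_mem hmem)
      intro B hB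
      rcases List.mem_map.1 hB with ⟨C, hC, rfl⟩
      exact (hneg C hC).ren r
  | ax hneg hT =>
      intro ctx' r
      rw [Fml.wk0_ren]
      refine .ax ?_ hT
      intro B hB
      rcases List.mem_map.1 hB with ⟨C, hC, rfl⟩
      exact (hneg C hC).ren r
  | botI hmem d ih =>
      intro ctx' r
      exact .botI (List.mem_map_of_mem hmem) (ih r)
  | botE d ih => intro ctx' r; exact .botE (ih r)
  | impI d ih => intro ctx' r; exact .impI (ih r)
  | impE d1 d2 ih1 ih2 => intro ctx' r; exact .impE (ih1 r) (ih2 r)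
  | conjI d1 d2 ih1 ih2 => intro ctx' r; exact .conjI (ih1 r) (ih2 r)
  | conjE1 d ih => intro ctx' r; exact .conjE1 (ih r)
  | conjE2 d ih => intro ctx' r; exact .conjE2 (ih r)
  | allI d ih =>
      intro ctx' r
      refine .allI ?_
      have h := ih (Ren.lift r)
      rw [List.map_map, List.map_map] at h
      rw [List.map_map, List.map_map, Fml.ren_wk_comm]
      exact h
  | allE t d ih =>
      intro ctx' r
      rw [Fml.sub0_ren]
      exact .allE (t.ren r) (ih r)

theorem DerivN.wkG {T : Fml S [] → Prop} {ctx Γ A Δ}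
    (d : DerivN T ctx Γ A Δ) : ∀ {Γ' : List (Fml S ctx)},
    (∀ B, B ∈ Γ → B ∈ Γ') → DerivN T ctx Γ' A Δ := by
  induction d with
  | id hneg hmem => exact fun hs => .id hneg (hs _ hmem)
  | ax hneg hT => exact fun _ => .ax hneg hT
  | botI hmem d ih => exact fun hs => .botI hmem (ih hs)
  | botE d ih => exact fun hs => .botE (ih hs)
  | impI d ih =>
      intro Γ' hs
      refine .impI (ih ?_)
      intro B hB
      rcases List.mem_cons.1 hB with h | h
      · exact h ▸ List.mem_cons_self
      · exact List.mem_cons_of_mem _ (hs _ h)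
  | impE d1 d2 ih1 ih2 => exact fun hs => .impE (ih1 hs) (ih2 hs)
  | conjI d1 d2 ih1 ih2 => exact fun hs => .conjI (ih1 hs) (ih2 hs)
  | conjE1 d ih => exact fun hs => .conjE1 (ih hs)
  | conjE2 d ih => exact fun hs => .conjE2 (ih hs)
  | allI d ih =>
      intro Γ' hs
      refine .allI (ih ?_)
      intro B hB
      rcases List.mem_map.1 hB with ⟨C, hC, rfl⟩
      exact List.mem_map_of_mem (hs _ hC)
  | allE t d ih => exact fun hs => .allE t (ih hs)

theorem derivAx {T : Fml S [] → Prop} {A : Fml S []} (h : T A) :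
    DerivN T [] [] A [] := by
  have := DerivN.ax (T := T) (ctx := []) (Γ := []) (Δ := [])
    (fun B hB => absurd hB List.not_mem_nil) h
  rwa [Fml.wk0_nil] at this

end Aux

/-! ## Relativization lemmas -/

section Rel
variable {S : Signature}

theorem Trm.ren_wk_lift {c c' : List (FSort S.Base)} {σ : FSort S.Base} (r : Ren c c')
    {ρ : FSort S.Base} (t : Trm S c ρ) :
    (t.ren (Ren.wk (σ := σ))).ren (Ren.lift r) = (t.ren r).ren (Ren.wk (σ := σ)) := by
  rw [Trm.ren_comp, Trm.ren_comp]
  congr 1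

theorem Trm.emb_ren {c c' : List (FSort S.Base)} (r : Ren c c') {σ} (t : Trm S c σ) :
    (t.ren r).emb = Trm.ren (S := SigR S) r t.emb := by
  induction t with
  | var i => simp [Trm.ren, Trm.emb]
  | cst cc => simp [Trm.ren, Trm.emb]
  | app t u iht ihu => simp [Trm.ren, Trm.emb, iht, ihu]

theorem TrmList.emb_ren {c c' : List (FSort S.Base)} (r : Ren c c') {l}
    (ts : TrmList S c l) :
    (ts.ren r).emb = TrmList.ren (S := SigR S) r ts.emb := by
  induction ts with
  | nil => simp [TrmList.ren, TrmList.emb]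
  | cons t ts ih => simp [TrmList.ren, TrmList.emb, Trm.emb_ren, ih]

theorem RelF_ren : ∀ (σ : FSort S.Base) {c c' : List (FSort S.Base)}
    (r : Ren (S := SigR S) c c') (t : Trm (SigR S) c σ),
    (RelF σ t).ren r = RelF σ (t.ren r)
  | .base b, _, _, r, t => by simp [RelF, Fml.ren, TrmList.ren]
  | .arrow σ τ, c, c', r, t => by
      simp only [RelF, Fml.ren, RelF_ren σ, RelF_ren τ]
      simp [Trm.ren, Ren.lift, Trm.ren_wk_lift]

theorem Ren.lift_sigr {c c' : List (FSort S.Base)} {σ : FSort S.Base} (r : Ren c c') :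
    (Ren.lift (S := SigR S) (σ := σ) r) = Ren.lift (S := S) (σ := σ) r := by
  funext τ i; cases i <;> rfl

theorem Ren.wk_sigr {ctx : List (FSort S.Base)} {σ : FSort S.Base} :
    (Ren.wk : Ren (S := SigR S) ctx (σ :: ctx)) = Ren.wk (S := S) := by
  funext τ i; rfl

theorem Fml.relativize_ren : ∀ {c : List (FSort S.Base)} (A : Fml S c)
    {c' : List (FSort S.Base)} (r : Ren c c'),
    (A.ren r).relativize = Fml.ren (S := SigR S) r A.relativize
  | _, .atom P ts, _, r => by simp [Fml.ren, Fml.relativize, TrmList.emb_ren]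
  | _, .bot, _, r => by simp [Fml.ren, Fml.relativize]
  | _, .imp A B, _, r => by
      simp [Fml.ren, Fml.relativize, Fml.relativize_ren A, Fml.relativize_ren B]
  | _, .conj A B, _, r => by
      simp [Fml.ren, Fml.relativize, Fml.relativize_ren A, Fml.relativize_ren B]
  | _, .all σ A, _, r => by
      simp only [Fml.ren, Fml.relativize, allR, Fml.relativize_ren A, RelF_ren,
        Ren.lift_sigr]
      simp [Trm.ren, Ren.lift]
      have h := RelF_ren σ (Ren.lift (σ := σ) r) (Trm.var (S := SigR S) .here)
      simp only [Trm.ren, Ren.lift] at h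
      exact h.symm

theorem Trm.emb_sub {c c' : List (FSort S.Base)} (s : Subst c c') {σ} (t : Trm S c σ) :
    (t.sub s).emb = Trm.sub (S := SigR S) (fun τ i => (s τ i).emb) t.emb := by
  induction t with
  | var i => simp [Trm.sub, Trm.emb]
  | cst cc => simp [Trm.sub, Trm.emb]
  | app t u iht ihu => simp [Trm.sub, Trm.emb, iht, ihu]

theorem TrmList.emb_sub {c c' : List (FSort S.Base)} (s : Subst c c') {l}
    (ts : TrmList S c l) :
    (ts.sub s).emb = TrmList.sub (S := SigR S) (fun τ i => (s τ i).emb) ts.emb := by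
  induction ts with
  | nil => simp [TrmList.sub, TrmList.emb]
  | cons t ts ih => simp [TrmList.sub, TrmList.emb, Trm.emb_sub, ih]

theorem Subst.lift_emb {c c' : List (FSort S.Base)} {σ : FSort S.Base} (s : Subst c c') :
    (Subst.lift (S := SigR S) (σ := σ) (fun τ i => (s τ i).emb))
      = fun τ i => ((Subst.lift (σ := σ) s) τ i).emb := by
  funext τ i
  cases i with
  | here => simp [Subst.lift, Trm.emb]
  | there i => exact (Trm.emb_ren _ _).symm

theorem Trm.sub_lift_wk {c c' : List (FSort S.Base)} {σ ρ : FSort S.Base}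
    (s : Subst (S := S) c c') (t : Trm S c ρ) :
    (t.ren (Ren.wk (σ := σ))).sub (Subst.lift s) = (t.sub s).ren (Ren.wk (σ := σ)) := by
  rw [Trm.ren_sub, Trm.sub_ren]
  congr 1

theorem RelF_sub : ∀ (σ : FSort S.Base) {c c' : List (FSort S.Base)}
    (s : Subst (S := SigR S) c c') (t : Trm (SigR S) c σ),
    (RelF σ t).sub s = RelF σ (t.sub s)
  | .base b, _, _, s, t => by simp [RelF, Fml.sub, TrmList.sub]
  | .arrow σ τ, c, c', s, t => by
      simp only [RelF, Fml.sub, RelF_sub σ, RelF_sub τ]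
      simp [Trm.sub, Subst.lift, Trm.sub_lift_wk]

theorem Fml.relativize_sub : ∀ {c : List (FSort S.Base)} (A : Fml S c)
    {c' : List (FSort S.Base)} (s : Subst c c'),
    (A.sub s).relativize = Fml.sub (S := SigR S) (fun τ i => (s τ i).emb) A.relativize
  | _, .atom P ts, _, s => by simp [Fml.sub, Fml.relativize, TrmList.emb_sub]
  | _, .bot, _, s => by simp [Fml.sub, Fml.relativize]
  | _, .imp A B, _, s => by
      simp [Fml.sub, Fml.relativize, Fml.relativize_sub A, Fml.relativize_sub B]
  | _, .conj A B, _, s => by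
      simp [Fml.sub, Fml.relativize, Fml.relativize_sub A, Fml.relativize_sub B]
  | _, .all σ A, _, s => by
      simp only [Fml.sub, Fml.relativize, allR, Fml.relativize_sub A, RelF_sub,
        Subst.lift_emb]
      simp [Trm.sub, Subst.lift, Trm.emb]
      have h := RelF_sub σ (Subst.lift (S := SigR S) (σ := σ) (fun τ i => (s τ i).emb))
        (Trm.var (S := SigR S) .here)
      simp only [Trm.sub, Subst.lift] at h
      rw [Subst.lift_emb] at h
      exact h.symm

end Rel

theorem Ren.lift_pasigr {c c' : List (FSort Unit)} {σ : FSort Unit} (r : Ren c c') :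
    (Ren.lift (S := PASigR) (σ := σ) r) = Ren.lift (S := PASig) (σ := σ) r :=
  Ren.lift_sigr (S := PASig) r

theorem Ren.wk_pasigr {ctx : List (FSort Unit)} {σ : FSort Unit} :
    (Ren.wk : Ren (S := PASigR) ctx (σ :: ctx)) = Ren.wk (S := PASig) :=
  Ren.wk_sigr (S := PASig)

/-! ## Relativized closures -/

/-- Fold of `allR` over a context. -/
def allsRel : ∀ (ctx : List (FSort Unit)), Fml PASigR ctx → Fml PASigR []
  | [], A => A
  | σ :: ctx, A => allsRel ctx (allR σ A)

theorem relativize_alls : ∀ (ctx : List (FSort Unit)) (A : Fml PASig ctx),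
    (alls ctx A).relativize = allsRel ctx A.relativize
  | [], A => rfl
  | σ :: ctx, A => by
      show (alls ctx (Fml.all (S := PASig) σ A)).relativize = _
      rw [relativize_alls ctx]
      simp [Fml.relativize, allsRel]
      rfl

/-- Replacing some prenex `∀` by `∀^r`. -/
inductive Rc : ∀ {ctx : List (FSort Unit)}, Fml PASigR ctx → Fml PASigR ctx → Prop
  | refl {ctx} {A : Fml PASigR ctx} : Rc A A
  | step {ctx σ} {A B : Fml PASigR (σ :: ctx)} : Rc A B → Rc (.all σ A) (allR σ B)

theorem rc_alls : ∀ (ctx : List (FSort Unit)) (A B : Fml PASigR ctx),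
    Rc A B → Rc (alls ctx A) (allsRel ctx B)
  | [], A, B, h => h
  | σ :: ctx, A, B, h => rc_alls ctx (.all σ A) (allR σ B) (.step h)

theorem rcDeriv {T : Fml PASigR [] → Prop} {ctx} {A B : Fml PASigR ctx}
    (h : Rc A B) : ∀ {Γ Δ}, DerivN T ctx Γ A Δ → DerivN T ctx Γ B Δ := by
  induction h with
  | refl => exact fun d => d
  | @step ctx σ A B h ih =>
      intro Γ Δ d
      refine .allI (.impI ?_)
      apply ih
      have d1 := d.renD (Ren.wk (σ := σ))
      have d2 := d1.wkG (Γ' := RelF σ (.var .here) :: Γ.map (Fml.ren Ren.wk))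
        (fun B hB => List.mem_cons_of_mem _ hB)
      have d3 := DerivN.allE (Trm.var .here) d2
      rwa [Fml.sub0_var_ren_wk] at d3

theorem relativize_sub0_zero {ctx : List (FSort Unit)} (A : Fml PASig (iota :: ctx)) :
    (A.sub0 zeroT).relativize = A.relativize.sub0 zeroT.emb := by
  show (A.sub _).relativize = A.relativize.sub _
  refine (Fml.relativize_sub _ _).trans ?_
  congr 1
  funext τ i; cases i
  · rfl
  · exact Trm.emb.eq_1 ..

theorem relativize_sub_succ {ctx : List (FSort Unit)} (A : Fml PASig (iota :: ctx)) :
    (A.sub (Subst.cons (.app succT (.var .here))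
        (fun _ i => .var (.there i)))).relativize
      = A.relativize.sub (Subst.cons (.app succT.emb (.var .here))
        (fun _ i => .var (.there i))) := by
  refine (Fml.relativize_sub _ _).trans ?_
  congr 1
  funext τ i; cases i
  · exact (Trm.emb.eq_3 ..).trans (congrArg (Trm.app succT.emb) (Trm.emb.eq_1 ..))
  · exact Trm.emb.eq_1 ..

/-- For every axiom `A` of `PA^ω`, the relativized theory `PA^ω_r` derives its
relativization: `PA^ω_r ⊢ A^r`. -/
theorem paOmegaR_derives_relativized_axioms (A : Fml PASig []) (h : PAAx A) :
    DerivN PArAx [] [] A.relativize [] := by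
  cases h with
  | refl σ =>
      exact rcDeriv (Rc.step Rc.refl) (derivAx (PArAx.base (PAEqAx.refl σ)))
  | snz =>
      exact rcDeriv (Rc.step Rc.refl) (derivAx (PArAx.base PAEqAx.snz))
  | defs σ τ ρ =>
      exact rcDeriv (Rc.step (Rc.step (Rc.step Rc.refl)))
        (derivAx (PArAx.base (PAEqAx.defs σ τ ρ)))
  | defk σ τ =>
      exact rcDeriv (Rc.step (Rc.step Rc.refl)) (derivAx (PArAx.base (PAEqAx.defk σ τ)))
  | defrecZ σ =>
      exact rcDeriv (Rc.step (Rc.step Rc.refl)) (derivAx (PArAx.base (PAEqAx.defrecZ σ)))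
  | defrecS σ =>
      exact rcDeriv (Rc.step (Rc.step (Rc.step Rc.refl)))
        (derivAx (PArAx.base (PAEqAx.defrecS σ)))
  | @leib ctx σ A =>
      have d := rcDeriv (rc_alls ctx _ _ (Rc.step (Rc.step Rc.refl)))
        (derivAx (PArAx.leib (ctx := ctx) σ A.relativize))
      rw [relativize_alls]
      simp only [Fml.relativize, notF, Fml.relativize_ren, neqF, neqR, TrmList.emb,
        Trm.emb, allR, Ren.lift_sigr, Ren.wk_sigr, Ren.lift_pasigr, Ren.wk_pasigr] at d ⊢
      have e : TrmList.emb (S := PASig) (ctx := σ :: σ :: ctx)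
          (.cons (.var (.there .here)) (.cons (.var .here) .nil))
          = .cons (.var (.there .here)) (.cons (.var .here) .nil) := by
        simp [TrmList.emb, Trm.emb]
        exact congrArg₂ TrmList.cons (Trm.emb.eq_1 ..)
          (congrArg₂ TrmList.cons (Trm.emb.eq_1 ..) rfl)
      erw [e]
      erw [Ren.lift_pasigr] at d
      exact d
  | @ind ctx A =>
      have d := rcDeriv (rc_alls ctx _ _ Rc.refl)
        (derivAx (PArAx.indR (ctx := ctx) A.relativize))
      rw [relativize_alls]
      simp only [Fml.relativize, relativize_sub0_zero, relativize_sub_succ, allR]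
      exact d
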